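/- Let N ≥ 1, m > 1, q ∈ (0,1), σ > 0, a ≥ (σ+2)/(m−q), and let A, R > 0 satisfy A^{m−q} R^{a(m−q)−σ−2} ≤ 1/(am(am+N−2)). Define S(x) := A|x|^a for x ∈ ℝ^N (Euclidean norm, real power). Then S is a stationary supersolution of ∂_t u = Δ(u^m) − |x|^σ u^q on B(0,R): for every x ∈ B(0,R) with x ≠ 0, the function y ↦ S(y)^m = A^m|y|^{am} is twice differentiable at x, its Laplacian (the sum over i = 1,…,N of the second partial derivatives ∂²/∂x_i²) at x equals am(am+N−2)A^m|x|^{am−2}, and am(am+N−2)A^m|x|^{am−2} ≤ |x|^σ S(x)^q. -/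

import Mathlib

/-!
On `x ≠ 0` the function `S ^ m = A ^ m ‖·‖ ^ (a m)` is a smooth radial power. For `c ‖·‖ ^ p`
the second derivative in direction `v` is `c p (‖x‖ ^ (p-2) ‖v‖² + (p-2) ‖x‖ ^ (p-4) ⟪x, v⟫²)`;
summing over an orthonormal basis gives the Laplacian `c p (p + N - 2) ‖x‖ ^ (p-2)`.
For the inequality, the Laplacian factors as `K A ^ (m-q) ‖x‖ ^ (a(m-q)-σ-2) · ‖x‖ ^ σ S(x) ^ q`
with `K = a m (a m + N - 2)`; since the exponent `a(m-q)-σ-2` is nonnegative, the first factor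
only grows when `‖x‖` is replaced by `R`, where the hypothesis bounds it by `1`.
-/

open Filter Topology

section RadialPower

variable {E : Type*} [NormedAddCommGroup E] [InnerProductSpace ℝ E] {x : E}

theorem hasFDerivAt_norm_rpow_of_ne_zero (p : ℝ) (hx : x ≠ 0) :
    HasFDerivAt (fun y : E ↦ ‖y‖ ^ p) ((p * ‖x‖ ^ (p - 2)) • innerSL ℝ x) x := by
  have hsq := (hasStrictFDerivAt_norm_sq x).hasFDerivAt.rpow_const (p := p / 2) (by simp [hx])
  simp_rw [← Real.rpow_natCast_mul (norm_nonneg _), ← Nat.cast_smul_eq_nsmul ℝ, smul_smul] at hsq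
  convert hsq using 2 <;> ring_nf

theorem contDiffAt_norm_rpow_of_ne_zero {n : WithTop ℕ∞} (p : ℝ) (hx : x ≠ 0) :
    ContDiffAt ℝ n (fun y : E ↦ ‖y‖ ^ p) x :=
  (Real.contDiffAt_rpow_const_of_ne (norm_ne_zero_iff.2 hx)).comp x (contDiffAt_norm ℝ hx)

theorem fderiv_const_mul_norm_rpow_apply_eventuallyEq (c p : ℝ) (hx : x ≠ 0) (v : E) :
    (fun y ↦ fderiv ℝ (fun z : E ↦ c * ‖z‖ ^ p) y v) =ᶠ[𝓝 x]
      fun y ↦ c * p * ‖y‖ ^ (p - 2) * inner ℝ y v := by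
  filter_upwards [isOpen_ne.mem_nhds hx] with y hy
  rw [((hasFDerivAt_norm_rpow_of_ne_zero p hy).const_mul c).fderiv]
  simp only [FunLike.coe_smul, Pi.smul_apply, innerSL_apply_apply, smul_eq_mul]
  ring

theorem fderiv_fderiv_const_mul_norm_rpow_apply (c p : ℝ) (hx : x ≠ 0) (v : E) :
    fderiv ℝ (fun y ↦ fderiv ℝ (fun z : E ↦ c * ‖z‖ ^ p) y v) x v =
      c * p * (‖x‖ ^ (p - 2) * ‖v‖ ^ 2 + (p - 2) * ‖x‖ ^ (p - 4) * inner ℝ x v ^ 2) := by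
  have hinner : HasFDerivAt (fun y : E ↦ inner ℝ y v) (innerSL ℝ v) x := by
    convert (innerSL ℝ v).hasFDerivAt using 1
    exact funext fun y ↦ real_inner_comm v y
  have hprod : HasFDerivAt (fun y ↦ c * p * ‖y‖ ^ (p - 2) * inner ℝ y v) _ x :=
    ((hasFDerivAt_norm_rpow_of_ne_zero (p - 2) hx).const_mul (c * p)).mul hinner
  rw [(fderiv_const_mul_norm_rpow_apply_eventuallyEq c p hx v).fderiv_eq, hprod.fderiv]
  simp only [add_apply, FunLike.coe_smul, Pi.smul_apply,
    innerSL_apply_apply, smul_eq_mul, real_inner_self_eq_norm_sq]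
  ring_nf

theorem sum_fderiv_fderiv_const_mul_norm_rpow_orthonormalBasis [FiniteDimensional ℝ E]
    {ι : Type*} [Fintype ι] (b : OrthonormalBasis ι ℝ E) (c p : ℝ) (hx : x ≠ 0) :
    ∑ i, fderiv ℝ (fun y ↦ fderiv ℝ (fun z : E ↦ c * ‖z‖ ^ p) y (b i)) x (b i) =
      c * p * (p + Module.finrank ℝ E - 2) * ‖x‖ ^ (p - 2) := by
  have hx0 : 0 < ‖x‖ := norm_pos_iff.2 hx
  have hpow : ‖x‖ ^ (p - 4) * ‖x‖ ^ 2 = ‖x‖ ^ (p - 2) := by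
    rw [← Real.rpow_natCast, ← Real.rpow_add hx0]
    ring_nf
  simp only [fderiv_fderiv_const_mul_norm_rpow_apply c p hx, b.norm_eq_one, one_pow, mul_one]
  rw [← Finset.mul_sum, Finset.sum_add_distrib, ← Finset.mul_sum, b.sum_sq_inner_left,
    Finset.sum_const, Finset.card_univ, ← Module.finrank_eq_card_basis b.toBasis, nsmul_eq_mul,
    ← hpow]
  ring

end RadialPower

theorem mul_rpow_le_of_rpow_le_one_div {K A m q a σ r R : ℝ} (hA : 0 < A) (hr : 0 < r)
    (hrR : r < R) (he : σ + 2 ≤ a * (m - q))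
    (hAR : A ^ (m - q) * R ^ (a * (m - q) - σ - 2) ≤ 1 / K) :
    K * A ^ m * r ^ (a * m - 2) ≤ r ^ σ * (A * r ^ a) ^ q := by
  have hR : 0 < R := hr.trans hrR
  have hK : 0 < K := one_div_pos.1 <| lt_of_lt_of_le (by positivity) hAR
  have hA_pow : A ^ m = A ^ (m - q) * A ^ q := by
    rw [← Real.rpow_add hA]
    ring_nf
  have hr_pow : r ^ (a * m - 2) = r ^ (a * (m - q) - σ - 2) * r ^ σ * r ^ (a * q) := by
    rw [← Real.rpow_add hr, ← Real.rpow_add hr]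
    ring_nf
  have hsplit : A ^ m * r ^ (a * m - 2) =
      A ^ (m - q) * r ^ (a * (m - q) - σ - 2) * (r ^ σ * (A * r ^ a) ^ q) := by
    rw [Real.mul_rpow hA.le (by positivity), ← Real.rpow_mul hr.le, hA_pow, hr_pow]
    ring
  calc K * A ^ m * r ^ (a * m - 2)
      = K * (A ^ (m - q) * r ^ (a * (m - q) - σ - 2)) * (r ^ σ * (A * r ^ a) ^ q) := by
        rw [mul_assoc, hsplit]
        ring
    _ ≤ K * (A ^ (m - q) * R ^ (a * (m - q) - σ - 2)) * (r ^ σ * (A * r ^ a) ^ q) := by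
        gcongr
        linarith
    _ ≤ K * (1 / K) * (r ^ σ * (A * r ^ a) ^ q) := by gcongr
    _ = r ^ σ * (A * r ^ a) ^ q := by rw [mul_one_div_cancel hK.ne', one_mul]

theorem stationary_supersolution_general
    (N : ℕ) (m q σ : ℝ) (hm : 1 < m) (hq1 : q < 1)
    (a A R : ℝ) (hA0 : 0 < A)
    (ha : (σ + 2) / (m - q) ≤ a)
    (hAR : A ^ (m - q) * R ^ (a * (m - q) - σ - 2) ≤ 1 / (a * m * (a * m + N - 2)))
    (S : EuclideanSpace ℝ (Fin N) → ℝ) (hS : ∀ x, S x = A * ‖x‖ ^ a)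
    (x : EuclideanSpace ℝ (Fin N)) (hx : x ≠ 0) (hxR : ‖x‖ < R) :
    ContDiffAt ℝ 2 (fun y : EuclideanSpace ℝ (Fin N) => S y ^ m) x ∧
    (∑ i : Fin N,
        fderiv ℝ (fun y : EuclideanSpace ℝ (Fin N) =>
          fderiv ℝ (fun z : EuclideanSpace ℝ (Fin N) => S z ^ m) y
            (EuclideanSpace.single i 1)) x (EuclideanSpace.single i 1))
      = a * m * (a * m + N - 2) * A ^ m * ‖x‖ ^ (a * m - 2) ∧
    a * m * (a * m + N - 2) * A ^ m * ‖x‖ ^ (a * m - 2) ≤ ‖x‖ ^ σ * S x ^ q := by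
  have hSm : (fun y => S y ^ m) = fun y => A ^ m * ‖y‖ ^ (a * m) := by
    funext y
    rw [hS, Real.mul_rpow hA0.le (by positivity), ← Real.rpow_mul (norm_nonneg y)]
  refine ⟨?_, ?_, ?_⟩
  · rw [hSm]
    exact contDiffAt_const.mul (contDiffAt_norm_rpow_of_ne_zero _ hx)
  · have hΔ := sum_fderiv_fderiv_const_mul_norm_rpow_orthonormalBasis
      (EuclideanSpace.basisFun (Fin N) ℝ) (A ^ m) (a * m) hx
    simp only [EuclideanSpace.basisFun_apply, finrank_euclideanSpace_fin] at hΔ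
    rw [hSm, hΔ]
    ring
  · rw [hS]
    exact mul_rpow_le_of_rpow_le_one_div hA0 (norm_pos_iff.2 hx) hxR
      ((div_le_iff₀ (by linarith)).1 ha) hAR

/-- **Lemma 3.1 (stationary supersolution).**
Let `N ≥ 1`, `m > 1`, `q ∈ (0,1)`, `σ > 0`, `a ≥ (σ+2)/(m−q)`, and `A, R > 0` with
`A^{m−q} R^{a(m−q)−σ−2} ≤ 1/(am(am+N−2))`.  Set `S(x) := A|x|^a`.  Then for every
`x ∈ B(0,R)`, `x ≠ 0`, the function `y ↦ S(y)^m = A^m|y|^{am}` is twice differentiable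
at `x`, its Laplacian at `x` equals `am(am+N−2)A^m|x|^{am−2}`, and this quantity is at
most `|x|^σ S(x)^q`; that is, `S` is a stationary supersolution of
`∂ₜ u = Δ(uᵐ) − |x|^σ u^q` on `B(0,R)`. -/
theorem stationary_supersolution
    (N : ℕ) (hN : 1 ≤ N) (m q σ : ℝ) (hm : 1 < m) (hq0 : 0 < q) (hq1 : q < 1)
    (hσ0 : 0 < σ) (a A R : ℝ) (hA0 : 0 < A) (hR0 : 0 < R)
    (ha : (σ + 2) / (m - q) ≤ a)
    (hAR : A ^ (m - q) * R ^ (a * (m - q) - σ - 2) ≤ 1 / (a * m * (a * m + N - 2)))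
    (S : EuclideanSpace ℝ (Fin N) → ℝ) (hS : ∀ x, S x = A * ‖x‖ ^ a)
    (x : EuclideanSpace ℝ (Fin N)) (hx : x ≠ 0) (hxR : ‖x‖ < R) :
    ContDiffAt ℝ 2 (fun y : EuclideanSpace ℝ (Fin N) => S y ^ m) x ∧
    (∑ i : Fin N,
        fderiv ℝ (fun y : EuclideanSpace ℝ (Fin N) =>
          fderiv ℝ (fun z : EuclideanSpace ℝ (Fin N) => S z ^ m) y
            (EuclideanSpace.single i 1)) x (EuclideanSpace.single i 1))
      = a * m * (a * m + N - 2) * A ^ m * ‖x‖ ^ (a * m - 2) ∧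
    a * m * (a * m + N - 2) * A ^ m * ‖x‖ ^ (a * m - 2) ≤ ‖x‖ ^ σ * S x ^ q :=
  stationary_supersolution_general N m q σ hm hq1 a A R hA0 ha hAR S hS x hx hxR
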